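/- Let Q ∈ SO(3), and let α, β, α′, β′ ∈ ℝ satisfy Z(α′)·Y(β′)·n = Q·Z(α)·Y(β)·n. Then there exists θ ∈ ℝ such that for all h ∈ ℝ: Z(α′)·Y(β′)·Z(2πh) = Q·Z(α)·Y(β)·Z(2πh)·Z(θ). (Equivalently, with T(s(α,β), h) = Z(α)Y(β)Z(2πh), one has T(Qx) = Q·T(x)·Z(θ) for some θ independent of h.) -/

import Mathlib

/-! Both `Z(α')·Y(β')` and `Q·Z(α)·Y(β)` are rotations sending the North Pole `n` to the
same point, so `(Q·Z(α)·Y(β))ᵀ·Z(α')·Y(β')` is a rotation fixing `n`, that is, a rotation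
`Z(θ)` about the z-axis. Rotations about the z-axis commute, so `Z(θ)` moves past `Z(2πh)`. -/

/-- The 3×3 rotation matrix about the z-axis by angle `θ`. -/
noncomputable def Zr (θ : ℝ) : Matrix (Fin 3) (Fin 3) ℝ :=
  !![Real.cos θ, -Real.sin θ, 0; Real.sin θ, Real.cos θ, 0; 0, 0, 1]

/-- The 3×3 rotation matrix about the y-axis by angle `β`. -/
noncomputable def Yr (β : ℝ) : Matrix (Fin 3) (Fin 3) ℝ :=
  !![Real.cos β, 0, Real.sin β; 0, 1, 0; -Real.sin β, 0, Real.cos β]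

/-- The North Pole `n = (0,0,1)ᵀ`. -/
def npole : Fin 3 → ℝ := ![0, 0, 1]

/-- The Euclidean norm of a vector in `ℝ³`. -/
noncomputable def enorm3 (v : Fin 3 → ℝ) : ℝ :=
  Real.sqrt (v 0 ^ 2 + v 1 ^ 2 + v 2 ^ 2)

open Matrix Real

lemma Zr_add (a b : ℝ) : Zr (a + b) = Zr a * Zr b := by
  ext i j
  fin_cases i <;> fin_cases j <;>
    simp [Zr, mul_apply, Fin.sum_univ_three, cos_add, sin_add] <;> ring

lemma Zr_mul_comm (a b : ℝ) : Zr a * Zr b = Zr b * Zr a := by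
  rw [← Zr_add, add_comm, Zr_add]

lemma Zr_mem_specialOrthogonalGroup (θ : ℝ) : Zr θ ∈ specialOrthogonalGroup (Fin 3) ℝ := by
  refine ⟨(mem_orthogonalGroup_iff _ _).mpr ?_, ?_⟩
  · ext i j
    fin_cases i <;> fin_cases j <;> simp [Zr, mul_apply, Fin.sum_univ_three, ← sq] <;> ring
  · simp [Zr, det_fin_three, ← sq]

lemma Yr_mem_specialOrthogonalGroup (β : ℝ) : Yr β ∈ specialOrthogonalGroup (Fin 3) ℝ := by
  refine ⟨(mem_orthogonalGroup_iff _ _).mpr ?_, ?_⟩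
  · ext i j
    fin_cases i <;> fin_cases j <;> simp [Yr, mul_apply, Fin.sum_univ_three, ← sq] <;> ring
  · simp [Yr, det_fin_three, ← sq]

lemma exists_cos_eq_sin_eq {a b : ℝ} (h : a ^ 2 + b ^ 2 = 1) :
    ∃ θ : ℝ, cos θ = a ∧ sin θ = b := by
  obtain ⟨θ, hθ⟩ := (Complex.norm_eq_one_iff ⟨a, b⟩).mp (by
    rw [Complex.norm_def, Complex.normSq_mk, ← sq, ← sq, h, Real.sqrt_one])
  exact ⟨θ, by simpa using congrArg Complex.re hθ, by simpa using congrArg Complex.im hθ⟩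

lemma mulVec_npole_eq_npole_iff {M : Matrix (Fin 3) (Fin 3) ℝ} :
    M *ᵥ npole = npole ↔ M 0 2 = 0 ∧ M 1 2 = 0 ∧ M 2 2 = 1 := by
  simp [funext_iff, Fin.forall_fin_succ, mulVec, dotProduct, Fin.sum_univ_three, npole]

lemma exists_eq_Zr_of_mulVec_npole {M : Matrix (Fin 3) (Fin 3) ℝ}
    (hM : M ∈ specialOrthogonalGroup (Fin 3) ℝ) (hn : M *ᵥ npole = npole) :
    ∃ θ, M = Zr θ := by
  obtain ⟨hMo, hdet⟩ := mem_specialOrthogonalGroup_iff.mp hM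
  have hMM : Mᵀ * M = 1 := (mem_orthogonalGroup_iff' _ _).mp hMo
  have hnT : Mᵀ *ᵥ npole = npole := by
    simpa only [mulVec_mulVec, hMM, one_mulVec] using (congrArg (Mᵀ *ᵥ ·) hn).symm
  obtain ⟨h02, h12, h22⟩ := mulVec_npole_eq_npole_iff.mp hn
  obtain ⟨h20, h21, -⟩ : M 2 0 = 0 ∧ M 2 1 = 0 ∧ M 2 2 = 1 :=
    mulVec_npole_eq_npole_iff.mp hnT
  have c00 := congrFun (congrFun hMM 0) 0
  have c01 := congrFun (congrFun hMM 0) 1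
  simp only [mul_apply, transpose_apply, Fin.sum_univ_three, h20, h21, mul_zero, add_zero,
    one_apply_eq, one_apply_ne zero_ne_one] at c00 c01
  have hminor : M 0 0 * M 1 1 - M 0 1 * M 1 0 = 1 := by
    simpa [det_fin_three, h02, h12, h20, h21, h22] using hdet
  obtain ⟨θ, hcos, hsin⟩ :=
    exists_cos_eq_sin_eq (a := M 0 0) (b := M 1 0) (by linear_combination c00)
  -- the first two columns are orthonormal with determinant one: the second is the first turned
  -- by a quarter turn
  have h01 : M 0 1 = -M 1 0 := by
    linear_combination M 0 0 * c01 - M 1 0 * hminor - M 0 1 * c00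
  have h11 : M 1 1 = M 0 0 := by
    linear_combination M 1 0 * c01 + M 0 0 * hminor - M 1 1 * c00
  refine ⟨θ, ?_⟩
  ext i j
  fin_cases i <;> fin_cases j <;>
    simp [Zr, hcos, hsin, h01, h11, h02, h12, h20, h21, h22]

lemma transpose_mem_specialOrthogonalGroup {n : Type*} [Fintype n] [DecidableEq n]
    {R : Type*} [CommRing R] {A : Matrix n n R} (hA : A ∈ specialOrthogonalGroup n R) :
    Aᵀ ∈ specialOrthogonalGroup n R := by
  obtain ⟨hAo, hAdet⟩ := mem_specialOrthogonalGroup_iff.mp hA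
  refine mem_specialOrthogonalGroup_iff.mpr ⟨(mem_orthogonalGroup_iff' n R).mpr ?_, ?_⟩
  · rw [transpose_transpose]
    exact (mem_orthogonalGroup_iff n R).mp hAo
  · rwa [det_transpose]

lemma exists_eq_mul_Zr_of_mulVec_npole_eq {A B : Matrix (Fin 3) (Fin 3) ℝ}
    (hA : A ∈ specialOrthogonalGroup (Fin 3) ℝ) (hB : B ∈ specialOrthogonalGroup (Fin 3) ℝ)
    (h : A *ᵥ npole = B *ᵥ npole) : ∃ θ, A = B * Zr θ := by
  have hBB : Bᵀ * B = 1 :=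
    (mem_orthogonalGroup_iff' _ _).mp (mem_specialOrthogonalGroup_iff.mp hB).1
  obtain ⟨θ, hθ⟩ := exists_eq_Zr_of_mulVec_npole (M := Bᵀ * A)
    (mul_mem (transpose_mem_specialOrthogonalGroup hB) hA)
    (by rw [← mulVec_mulVec, h, mulVec_mulVec, hBB, one_mulVec])
  refine ⟨θ, ?_⟩
  rw [← hθ, ← mul_assoc, mul_eq_one_comm.mp hBB, one_mul]

/-- **`T(Qx) = Q·T(x)·Z(θ)` for some `θ` independent of `h`.**
If `Q ∈ SO(3)` and `Z(α′)·Y(β′)·n = Q·Z(α)·Y(β)·n`, then there exists `θ ∈ ℝ` such that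
`Z(α′)·Y(β′)·Z(2πh) = Q·Z(α)·Y(β)·Z(2πh)·Z(θ)` for all `h ∈ ℝ`. -/
theorem euler_param_of_rotated_point
    (Q : Matrix (Fin 3) (Fin 3) ℝ) (hQ : Q ∈ Matrix.specialOrthogonalGroup (Fin 3) ℝ)
    (α β α' β' : ℝ)
    (h : (Zr α' * Yr β').mulVec npole = Q.mulVec ((Zr α * Yr β).mulVec npole)) :
    ∃ θ : ℝ, ∀ h' : ℝ,
      Zr α' * Yr β' * Zr (2 * Real.pi * h')
        = Q * (Zr α * Yr β * Zr (2 * Real.pi * h')) * Zr θ := by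
  obtain ⟨θ, hθ⟩ := exists_eq_mul_Zr_of_mulVec_npole_eq
    (mul_mem (Zr_mem_specialOrthogonalGroup α') (Yr_mem_specialOrthogonalGroup β'))
    (mul_mem hQ (mul_mem (Zr_mem_specialOrthogonalGroup α) (Yr_mem_specialOrthogonalGroup β)))
    (by rw [h, mulVec_mulVec])
  refine ⟨θ, fun t => ?_⟩
  rw [hθ, mul_assoc, Zr_mul_comm]
  simp only [mul_assoc]
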